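/- Let Br be a Bratteli diagram with potential F on its arrows, and let Geo^F(Br) be the set of infinite paths p from the root such that F(p[1,n]) ≤ F(μ) for every finite path μ of length n from the root with the same endpoint as p[1,n], for all n. Let Br^+ be the sub-diagram whose arrows are the arrows appearing in some geodesic. Then every infinite path in Br^+ starting at the root is an F-geodesic; i.e. P(Br^+) = Geo^F(Br). -/
import Mathlib


open scoped BigOperators

/-- A Bratteli diagram: finite nonempty level sets `V n`, arrows `E n` from level `n`
to level `n+1`, a single root at level `0`, no sinks, and no sources besides the root. -/
structure Bratteli where
  V : ℕ → Type
  E : ℕ → Type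
  instVFin : ∀ n, Fintype (V n)
  instEFin : ∀ n, Fintype (E n)
  instVNe : ∀ n, Nonempty (V n)
  instRoot : Subsingleton (V 0)
  src : ∀ n, E n → V n
  rng : ∀ n, E n → V (n + 1)
  noSink : ∀ n (v : V n), ∃ e : E n, src n e = v
  noSource : ∀ n (v : V (n + 1)), ∃ e : E n, rng n e = v

attribute [instance] Bratteli.instVFin Bratteli.instEFin Bratteli.instVNe Bratteli.instRoot

/-- Finite paths of length `n` starting at the root. -/
abbrev Bratteli.FinPath (B : Bratteli) (n : ℕ) :=
  { p : ∀ i : Fin n, B.E i.val //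
    ∀ (i : ℕ) (h : i + 1 < n),
      B.rng i (p ⟨i, Nat.lt_of_succ_lt h⟩) = B.src (i + 1) (p ⟨i + 1, h⟩) }

/-- Infinite paths starting at the root. -/
structure Bratteli.InfPath (B : Bratteli) where
  arrow : ∀ n, B.E n
  compat : ∀ n, B.rng n (arrow n) = B.src (n + 1) (arrow (n + 1))

/-- The initial segment `p[1,n]` of an infinite path. -/
def Bratteli.InfPath.take {B : Bratteli} (p : B.InfPath) (n : ℕ) : B.FinPath n :=
  ⟨fun i => p.arrow i.val, fun i _ => p.compat i⟩

/-- The endpoint (range) of a finite path of positive length. -/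
def pend {B : Bratteli} {n : ℕ} (μ : B.FinPath (n + 1)) : B.V (n + 1) :=
  B.rng n (μ.1 ⟨n, Nat.lt_succ_self n⟩)

/-- The vertex at level `n` through which a path of length `n+1` passes. -/
def through {B : Bratteli} {n : ℕ} (μ : B.FinPath (n + 1)) : B.V n :=
  B.src n (μ.1 ⟨n, Nat.lt_succ_self n⟩)

/-- The value `F(μ) = Σ_i F(a_i)` of a potential on a finite path. -/
noncomputable def pathVal {B : Bratteli} (F : ∀ n, B.E n → ℝ) {n : ℕ}
    (μ : B.FinPath n) : ℝ :=
  ∑ i : Fin n, F i.val (μ.1 i)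

/-- An infinite path `p` from the root is an `F`-geodesic when for every `n`,
`F(p[1,n]) ≤ F(μ)` for every length-`n` path `μ` from the root with the same endpoint. -/
def IsGeodesic {B : Bratteli} (F : ∀ n, B.E n → ℝ) (p : B.InfPath) : Prop :=
  ∀ (n : ℕ) (μ : B.FinPath (n + 1)), pend μ = pend (p.take (n + 1)) →
    pathVal F (p.take (n + 1)) ≤ pathVal F μ

/-- Endpoint of a finite path, defined also at level 0 (the root). -/
noncomputable def endpt {B : Bratteli} : ∀ {n : ℕ}, B.FinPath n → B.V n
  | 0, _ => Classical.arbitrary _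
  | _ + 1, μ => pend μ

lemma pathVal_take_succ {B : Bratteli} (F : ∀ n, B.E n → ℝ) (p : B.InfPath) (n : ℕ) :
    pathVal F (p.take (n + 1)) = pathVal F (p.take n) + F n (p.arrow n) := by
  simp [pathVal, Bratteli.InfPath.take, Fin.sum_univ_castSucc]

lemma endpt_take_eq {B : Bratteli} (p q : B.InfPath) (n : ℕ)
    (h : q.arrow n = p.arrow n) : endpt (q.take n) = endpt (p.take n) := by
  cases n with
  | zero => exact Subsingleton.elim _ _
  | succ k =>
      show pend (q.take (k + 1)) = pend (p.take (k + 1))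
      show B.rng k (q.arrow k) = B.rng k (p.arrow k)
      rw [q.compat k, p.compat k, h]

lemma main_aux {B : Bratteli} (F : ∀ n, B.E n → ℝ) (p : B.InfPath)
    (H : ∀ n, ∃ q : B.InfPath, IsGeodesic F q ∧ q.arrow n = p.arrow n) :
    ∀ (n : ℕ) (μ : B.FinPath n), endpt μ = endpt (p.take n) →
      pathVal F (p.take n) ≤ pathVal F μ := by
  intro n
  induction n with
  | zero => intro μ _; simp [pathVal]
  | succ k ih =>
      intro μ hμ
      obtain ⟨q, hq, hqa⟩ := H k
      have hpe : pend (q.take (k + 1)) = pend (p.take (k + 1)) := by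
        show B.rng k (q.arrow k) = B.rng k (p.arrow k); rw [hqa]
      have h1 : pathVal F (q.take (k + 1)) ≤ pathVal F μ := by
        refine hq k μ ?_
        have hμ' : pend μ = pend (p.take (k + 1)) := hμ
        rw [hμ', hpe]
      have h2 : pathVal F (p.take k) ≤ pathVal F (q.take k) :=
        ih (q.take k) (endpt_take_eq p q k hqa)
      calc pathVal F (p.take (k + 1))
          = pathVal F (p.take k) + F k (p.arrow k) := pathVal_take_succ F p k
        _ ≤ pathVal F (q.take k) + F k (q.arrow k) := by rw [hqa]; linarith
        _ = pathVal F (q.take (k + 1)) := (pathVal_take_succ F q k).symm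
        _ ≤ pathVal F μ := h1

/-- An infinite path lies in the geodesic sub-diagram `Br⁺` (each of its arrows occurs in
some geodesic) if and only if it is itself an `F`-geodesic: `P(Br⁺) = Geo^F(Br)`. -/
theorem stmt_0 (B : Bratteli) (F : ∀ n, B.E n → ℝ) (p : B.InfPath) :
    (∀ n, ∃ q : B.InfPath, IsGeodesic F q ∧ q.arrow n = p.arrow n) ↔ IsGeodesic F p := by
  constructor
  · intro H n μ h
    exact main_aux F p H (n + 1) μ h
  · intro h n
    exact ⟨p, h, rfl⟩
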